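/- The function F_NWW(x) = Φ(e^{(x/λ₁)^{k₁}} − 1) − Φ(−(x/λ₂)^{k₂}) for x ≥ 0 (and F_NWW(x) = 0 for x < 0), with k₁, λ₁, k₂, λ₂ > 0, is a cumulative distribution function on ℝ: F_NWW(0) = 0, F_NWW is non-decreasing, continuous, and tends to 1 as x → ∞. -/
import Mathlib


open Filter Topology

/-- The standard normal CDF. -/
noncomputable def Phi (z : ℝ) : ℝ :=
  ∫ t in Set.Iic z, (Real.sqrt (2 * Real.pi))⁻¹ * Real.exp (-t ^ 2 / 2)

/-- The Normal-Weibull-Weibull CDF. -/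
noncomputable def FNWW (k₁ lam₁ k₂ lam₂ x : ℝ) : ℝ :=
  if x < 0 then 0
  else Phi (Real.exp ((x / lam₁) ^ k₁) - 1) - Phi (-((x / lam₂) ^ k₂))

lemma gauss_integrable :
    MeasureTheory.Integrable
      (fun t : ℝ => (Real.sqrt (2 * Real.pi))⁻¹ * Real.exp (-t ^ 2 / 2)) := by
  have h := (integrable_exp_neg_mul_sq (show (0:ℝ) < 1/2 by norm_num)).const_mul
    ((Real.sqrt (2 * Real.pi))⁻¹)
  convert h using 2 with t
  rw [show -t ^ 2 / 2 = -(1/2) * t ^ 2 by ring]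

lemma integral_gauss :
    (∫ t : ℝ, (Real.sqrt (2 * Real.pi))⁻¹ * Real.exp (-t ^ 2 / 2)) = 1 := by
  rw [MeasureTheory.integral_const_mul]
  have : (fun t : ℝ => Real.exp (-t ^ 2 / 2)) = fun t : ℝ => Real.exp (-(1/2) * t ^ 2) := by
    funext t; rw [show -t ^ 2 / 2 = -(1/2) * t ^ 2 by ring]
  rw [this, integral_gaussian, show Real.pi / (1/2) = 2 * Real.pi by ring]
  exact inv_mul_cancel₀ (by positivity)

lemma Phi_mono : Monotone Phi := by
  intro x y hxy
  apply MeasureTheory.setIntegral_mono_set gauss_integrable.integrableOn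
  · filter_upwards with t using by positivity
  · exact (Set.Iic_subset_Iic.2 hxy).eventuallyLE

lemma Phi_cont : Continuous Phi := by
  have h : Phi = fun x => (∫ t in (0:ℝ)..x,
      (Real.sqrt (2 * Real.pi))⁻¹ * Real.exp (-t ^ 2 / 2)) + Phi 0 := by
    funext x
    rw [← intervalIntegral.integral_Iic_sub_Iic gauss_integrable.integrableOn
      gauss_integrable.integrableOn]
    simp [Phi]
  rw [h]
  exact (gauss_integrable.continuous_primitive 0).add continuous_const

lemma Phi_atTop : Tendsto Phi atTop (𝓝 1) := by
  have h := MeasureTheory.tendsto_setIntegral_of_monotone (s := fun r : ℝ => Set.Iic r)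
    (fun r => measurableSet_Iic) (fun a b hab => Set.Iic_subset_Iic.2 hab)
    (by rw [Set.iUnion_Iic]; exact gauss_integrable.integrableOn)
  rw [Set.iUnion_Iic, MeasureTheory.setIntegral_univ, integral_gauss] at h
  exact h

lemma Phi_atBot : Tendsto Phi atBot (𝓝 0) := by
  have h := MeasureTheory.tendsto_setIntegral_of_antitone (s := fun r : ℝ => Set.Iic (-r))
    (fun r => measurableSet_Iic)
    (fun a b hab => Set.Iic_subset_Iic.2 (neg_le_neg hab))
    ⟨0, gauss_integrable.integrableOn⟩
  have hempty : (⋂ r : ℝ, Set.Iic (-r)) = ∅ := by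
    ext x
    simp only [Set.mem_iInter, Set.mem_Iic, Set.mem_empty_iff_false, iff_false, not_forall]
    exact ⟨-(x - 1), by push_neg; linarith⟩
  rw [hempty] at h
  simp only [MeasureTheory.setIntegral_empty] at h
  have := h.comp tendsto_neg_atBot_atTop
  refine this.congr fun x => ?_
  simp [Phi]

/-- `F_NWW` is a CDF on `ℝ`: it vanishes at `0`, is non-decreasing, continuous,
and tends to `1` at `+∞`. -/
theorem stmt11 (k₁ lam₁ k₂ lam₂ : ℝ)
    (hk₁ : 0 < k₁) (hlam₁ : 0 < lam₁) (hk₂ : 0 < k₂) (hlam₂ : 0 < lam₂) :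
    FNWW k₁ lam₁ k₂ lam₂ 0 = 0 ∧
    Monotone (FNWW k₁ lam₁ k₂ lam₂) ∧
    Continuous (FNWW k₁ lam₁ k₂ lam₂) ∧
    Tendsto (FNWW k₁ lam₁ k₂ lam₂) atTop (𝓝 1) := by
  have hzero : FNWW k₁ lam₁ k₂ lam₂ 0 = 0 := by
    simp [FNWW, Real.zero_rpow hk₁.ne', Real.zero_rpow hk₂.ne']
  have hg_nonneg : ∀ x : ℝ, 0 ≤ x →
      0 ≤ Phi (Real.exp ((x / lam₁) ^ k₁) - 1) - Phi (-((x / lam₂) ^ k₂)) := by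
    intro x hx
    have h1 : (0:ℝ) ≤ (x / lam₁) ^ k₁ := Real.rpow_nonneg (by positivity) _
    have h2 : (0:ℝ) ≤ (x / lam₂) ^ k₂ := Real.rpow_nonneg (by positivity) _
    have : (-((x / lam₂) ^ k₂)) ≤ Real.exp ((x / lam₁) ^ k₁) - 1 := by
      have := Real.add_one_le_exp ((x / lam₁) ^ k₁)
      linarith
    linarith [Phi_mono this]
  have hmono : Monotone (FNWW k₁ lam₁ k₂ lam₂) := by
    intro a b hab
    unfold FNWW
    by_cases hb : b < 0
    · rw [if_pos hb, if_pos (lt_of_le_of_lt hab hb)]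
    · rw [if_neg hb]
      push_neg at hb
      by_cases ha : a < 0
      · rw [if_pos ha]
        exact hg_nonneg b hb
      · rw [if_neg ha]
        push_neg at ha
        have h1 : (a / lam₁) ^ k₁ ≤ (b / lam₁) ^ k₁ := by
          apply Real.rpow_le_rpow (by positivity) _ hk₁.le
          gcongr
        have h2 : (a / lam₂) ^ k₂ ≤ (b / lam₂) ^ k₂ := by
          apply Real.rpow_le_rpow (by positivity) _ hk₂.le
          gcongr
        have hA := Phi_mono (by linarith [Real.exp_le_exp.2 h1] :
          Real.exp ((a / lam₁) ^ k₁) - 1 ≤ Real.exp ((b / lam₁) ^ k₁) - 1)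
        have hB := Phi_mono (neg_le_neg h2)
        linarith
  have hcont : Continuous (FNWW k₁ lam₁ k₂ lam₂) := by
    have heq : FNWW k₁ lam₁ k₂ lam₂ = fun x =>
        Phi (Real.exp ((max x 0 / lam₁) ^ k₁) - 1) - Phi (-((max x 0 / lam₂) ^ k₂)) := by
      funext x
      unfold FNWW
      by_cases hx : x < 0
      · rw [if_pos hx, max_eq_right hx.le]
        simp [Real.zero_rpow hk₁.ne', Real.zero_rpow hk₂.ne']
      · rw [if_neg hx, max_eq_left (not_lt.1 hx)]
    rw [heq]
    have hbase : ∀ lam : ℝ, Continuous fun x : ℝ => max x 0 / lam :=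
      fun lam => (continuous_id.max continuous_const).div_const lam
    have hrpow : ∀ (lam k : ℝ), 0 < k → Continuous fun x : ℝ => (max x 0 / lam) ^ k := by
      intro lam k hk
      rw [continuous_iff_continuousAt]
      intro x
      exact (Real.continuousAt_rpow_const _ _ (Or.inr hk.le)).comp (hbase lam).continuousAt
    exact (Phi_cont.comp (((Real.continuous_exp.comp (hrpow lam₁ k₁ hk₁)).sub
      continuous_const))).sub (Phi_cont.comp (hrpow lam₂ k₂ hk₂).neg)
  have hlim : Tendsto (FNWW k₁ lam₁ k₂ lam₂) atTop (𝓝 1) := by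
    have hA : Tendsto (fun x : ℝ => (x / lam₁) ^ k₁) atTop atTop :=
      (tendsto_rpow_atTop hk₁).comp (tendsto_id.atTop_div_const hlam₁)
    have hA' : Tendsto (fun x : ℝ => Real.exp ((x / lam₁) ^ k₁) - 1) atTop atTop :=
      tendsto_atTop_add_const_right _ (-1) (Real.tendsto_exp_atTop.comp hA)
    have hB : Tendsto (fun x : ℝ => -((x / lam₂) ^ k₂)) atTop atBot :=
      tendsto_neg_atTop_atBot.comp
        ((tendsto_rpow_atTop hk₂).comp (tendsto_id.atTop_div_const hlam₂))
    have h := (Phi_atTop.comp hA').sub (Phi_atBot.comp hB)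
    rw [sub_zero] at h
    refine h.congr' ?_
    filter_upwards [eventually_ge_atTop (0:ℝ)] with x hx
    rw [FNWW, if_neg (not_lt.2 hx)]; rfl
  exact ⟨hzero, hmono, hcont, hlim⟩
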